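/- Let V₁, V₂ : ℝ → ℝ be C¹ and bounded with V₁(x) > 0 > V₂(x) for all x ∈ ℝ. Let ℝ²_∘ = {(x₁,x₂) ∈ ℝ² : x₁·x₂ ≤ 0} and define F on ℝ² by F(x₁,x₂) = (0, V₂(x₂)) if x₁ = 0 and x₂ > 0; F(x₁,x₂) = (V₁(x₁), 0) if x₂ = 0 and x₁ < 0; and F(x₁,x₂) = (V₁(x₁), V₂(x₂)) otherwise. Then ℝ²_∘ is positively invariant, through every point of ℝ²_∘ there is a unique complete integral curve of F that remains in ℝ²_∘, and the resulting semiflow Φ* : ℝ²_∘ × ℝ₊ → ℝ²_∘ is continuous. (Dynamics of two trains on a single track line with a passing loop at 0, with zero waiting thresholds.) -/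

import Mathlib

open Set Filter Topology

/-- The domain `[0, T)`, where `T ∈ (0, ∞]` is encoded as an `EReal`. -/
def eDom (T : EReal) : Set ℝ := {t : ℝ | 0 ≤ t ∧ (t : EReal) < T}

/-- `φ` is an integral curve of the (possibly discontinuous) vector field `F` on `[0,T)`
with initial condition `X₀`: `φ` is continuous on `[0,T)`, `φ 0 = X₀`, and there is a
closed countable subset `D` of `[0,T)` containing `0` such that for every `u ∈ D` there is
`v ∈ D ∪ {T}` with `v > u`, `(u,v) ∩ D = ∅`, `φ` is `C¹` on `(u,v)` with `φ' = F ∘ φ`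
there, and `φ'(t) → F(φ(u))` as `t → u+`; moreover, the intervals `[u,v)` cover `[0,T)`. -/
def IsNetIntegralCurve {E : Type*} [NormedAddCommGroup E] [NormedSpace ℝ E]
    (F : E → E) (X₀ : E) (T : EReal) (φ : ℝ → E) : Prop :=
  0 < T ∧ φ 0 = X₀ ∧ ContinuousOn φ (eDom T) ∧
  ∃ D : Set ℝ, D.Countable ∧ (0 : ℝ) ∈ D ∧ D ⊆ eDom T ∧ closure D ∩ eDom T ⊆ D ∧
    (∀ u ∈ D, ∃ v : EReal, ((∃ w ∈ D, (w : EReal) = v) ∨ v = T) ∧ (u : EReal) < v ∧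
      (∀ w ∈ D, (u : EReal) < (w : EReal) → v ≤ (w : EReal)) ∧
      (∀ t : ℝ, (u : EReal) < (t : EReal) → (t : EReal) < v → HasDerivAt φ (F (φ t)) t) ∧
      ContinuousOn (fun t => F (φ t)) {t : ℝ | (u : EReal) < (t : EReal) ∧ (t : EReal) < v} ∧
      Tendsto (fun t => F (φ t)) (𝓝[>] u) (𝓝 (F (φ u)))) ∧
    (∀ t ∈ eDom T, ∃ u ∈ D, u ≤ t ∧ Ioc u t ∩ D = ∅)

/-- The amenability trajectory condition: through every point `X` there is an integral
curve of the network vector field, defined on some interval `[0, t(X))` with `t(X) > 0`,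
that stays in the event set `E^{ℰ(X)}` of `X`. -/
def AmenableTraj {E A : Type*} [NormedAddCommGroup E] [NormedSpace ℝ E]
    (f : A → E → E) (ℰ : E → A) : Prop :=
  ∀ X : E, ∃ tX : ℝ, 0 < tX ∧ ∃ φ : ℝ → E,
    IsNetIntegralCurve (fun Y => f (ℰ Y) Y) X (tX : EReal) φ ∧
    ∀ t : ℝ, 0 ≤ t → t < tX → ℰ (φ t) = ℰ X

/-!
Measure each train by its *time coordinate* `τᵢ xᵢ = ∫₀^{xᵢ} 1 / Vᵢ`, the signed time since it
passed the loop. In these coordinates both trains run at unit speed, except that a train standing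
at the loop (`τ = 0`) waits while the other one has not arrived yet (`τ < 0`). On `ℝ²_∘` both
time coordinates have the same sign, and the motion is explicit: each coordinate grows until its
train reaches the loop, stays at `0` until the later train arrives, and then grows again. This
explicit motion is jointly continuous and is an integral curve with at most three breaks.

Conversely, along any integral curve the rates of the time coordinates take only the values `0`
and `1`, and the right-limit condition on `φ'` makes them right-continuous, hence constant just
after each time. So each time coordinate is affine just after every time, with the rate prescribed
by the current state, and a continuous induction identifies the curve with the explicit one.
Positive invariance follows from uniqueness.
-/

@[simp]
theorem eDom_top : eDom ⊤ = Ici 0 := by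
  ext t; simp [eDom]

section IntegralCurves

variable {E : Type*} [NormedAddCommGroup E] [NormedSpace ℝ E] {F : E → E} {X₀ : E} {T : EReal}
  {φ : ℝ → E}

theorem IsNetIntegralCurve.exists_hasDerivAt_Ioo (hφ : IsNetIntegralCurve F X₀ T φ) {t : ℝ}
    (ht : t ∈ eDom T) :
    ∃ c : ℝ, t < c ∧ (c : EReal) ≤ T ∧ (∀ s ∈ Ioo t c, HasDerivAt φ (F (φ s)) s) ∧
      Tendsto (fun s => F (φ s)) (𝓝[>] t) (𝓝 (F (φ t))) := by
  obtain ⟨-, -, -, D, -, -, hDT, -, hpiece, hcover⟩ := hφ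
  obtain ⟨u, huD, hut, hgap⟩ := hcover t ht
  obtain ⟨v, hvD, huv, -, hderiv, hcont, hlim⟩ := hpiece u huD
  have hvT : v ≤ T := by
    rcases hvD with ⟨w, hw, rfl⟩ | rfl
    exacts [(hDT hw).2.le, le_rfl]
  have htv : (t : EReal) < v := by
    rcases hut.eq_or_lt with rfl | hlt
    · exact huv
    refine lt_of_not_ge fun hvt => ?_
    rcases hvD with ⟨w, hw, rfl⟩ | rfl
    · exact (Set.ext_iff.1 hgap w).1 ⟨⟨EReal.coe_lt_coe_iff.1 huv, EReal.coe_le_coe_iff.1 hvt⟩, hw⟩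
    · exact ht.2.not_ge hvt
  obtain ⟨c, htc, hcv⟩ := EReal.exists_between_coe_real htv
  have hsub : Ioo t c ⊆ {s : ℝ | (u : EReal) < s ∧ (s : EReal) < v} := fun s hs =>
    ⟨(EReal.coe_le_coe_iff.2 hut).trans_lt (EReal.coe_lt_coe_iff.2 hs.1),
      (EReal.coe_lt_coe_iff.2 hs.2).trans hcv⟩
  refine ⟨c, EReal.coe_lt_coe_iff.1 htc, hcv.le.trans hvT,
    fun s hs => hderiv s (hsub hs).1 (hsub hs).2, ?_⟩
  rcases hut.eq_or_lt with rfl | hlt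
  · exact hlim
  -- `t` lies inside the piece `(u, v)`, where `F ∘ φ` is continuous
  have hnhds : {s : ℝ | (u : EReal) < s ∧ (s : EReal) < v} ∈ 𝓝 t :=
    mem_of_superset (Ioo_mem_nhds hlt (EReal.coe_lt_coe_iff.1 htc)) fun s hs =>
      ⟨(EReal.coe_lt_coe_iff.2 hs.1), (EReal.coe_lt_coe_iff.2 hs.2).trans hcv⟩
  exact ((hcont t ⟨EReal.coe_lt_coe_iff.2 hlt, htv⟩).continuousAt hnhds).tendsto.mono_left
    nhdsWithin_le_nhds

theorem IsNetIntegralCurve.hasDerivWithinAt_Ici (hφ : IsNetIntegralCurve F X₀ T φ) {t : ℝ}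
    (ht : t ∈ eDom T) : HasDerivWithinAt φ (F (φ t)) (Ici t) t := by
  obtain ⟨c, htc, hcT, hderiv, hlim⟩ := hφ.exists_hasDerivAt_Ioo ht
  have hIoo : Ioo t c ⊆ eDom T := fun s hs =>
    ⟨ht.1.trans hs.1.le, (EReal.coe_lt_coe_iff.2 hs.2).trans_le hcT⟩
  refine hasDerivWithinAt_Ici_of_tendsto_deriv
    (fun s hs => (hderiv s hs).differentiableAt.differentiableWithinAt)
    ((hφ.2.2.1 t ht).mono hIoo) (Ioo_mem_nhdsGT htc) (hlim.congr' ?_)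
  filter_upwards [Ioo_mem_nhdsGT htc] with s hs using (hderiv s hs).deriv.symm

theorem isNetIntegralCurve_top_of_finite {D : Set ℝ} (hD : D.Finite) (hD0 : 0 ∈ D)
    (hDnn : D ⊆ Ici 0) (hφ : ContinuousOn φ (Ici 0))
    (hderiv : ∀ t, 0 < t → t ∉ D → HasDerivAt φ (F (φ t)) t ∧ ContinuousAt (fun s => F (φ s)) t)
    (hright : ∀ t ∈ D, Tendsto (fun s => F (φ s)) (𝓝[>] t) (𝓝 (F (φ t)))) :
    IsNetIntegralCurve F (φ 0) ⊤ φ := by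
  refine ⟨EReal.zero_lt_top, rfl, by rwa [eDom_top], D, hD.countable, hD0, by rwa [eDom_top],
    by rw [hD.isClosed.closure_eq]; exact inter_subset_left, fun u hu => ?_, fun t ht => ?_⟩
  · suffices ∃ v : EReal, ((∃ w ∈ D, (w : EReal) = v) ∨ v = ⊤) ∧ (u : EReal) < v ∧
        ∀ w ∈ D, (u : EReal) < w → v ≤ w by
      obtain ⟨v, hvD, huv, hnext⟩ := this
      have hgap : ∀ t : ℝ, (u : EReal) < t → (t : EReal) < v → 0 < t ∧ t ∉ D := fun t h₁ h₂ =>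
        ⟨(hDnn hu).trans_lt (EReal.coe_lt_coe_iff.1 h₁), fun ht => (hnext t ht h₁).not_gt h₂⟩
      refine ⟨v, hvD, huv, hnext, fun t h₁ h₂ => (hderiv t (hgap t h₁ h₂).1 (hgap t h₁ h₂).2).1,
        fun t ht => (hderiv t (hgap t ht.1 ht.2).1 (hgap t ht.1 ht.2).2).2.continuousWithinAt,
        hright u hu⟩
    by_cases hlater : (D ∩ Ioi u).Nonempty
    · obtain ⟨w, ⟨hwD, huw⟩, hmin⟩ := exists_min_image _ id (hD.inter_of_left _) hlater
      exact ⟨w, Or.inl ⟨w, hwD, rfl⟩, EReal.coe_lt_coe_iff.2 huw,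
        fun w' hw' huw' => EReal.coe_le_coe_iff.2 (hmin w' ⟨hw', EReal.coe_lt_coe_iff.1 huw'⟩)⟩
    · exact ⟨⊤, Or.inr rfl, EReal.coe_lt_top u,
        fun w hw huw => absurd ⟨w, hw, EReal.coe_lt_coe_iff.1 huw⟩ hlater⟩
  · rw [eDom_top] at ht
    obtain ⟨u, ⟨huD, hut⟩, hmax⟩ :=
      exists_max_image (D ∩ Iic t) id (hD.inter_of_left _) ⟨0, hD0, ht⟩
    exact ⟨u, huD, hut, eq_empty_of_forall_notMem fun w ⟨hw, hwD⟩ =>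
      (hmax w ⟨hwD, hw.2⟩).not_gt hw.1⟩

end IntegralCurves

theorem eventually_le_iff_nhdsGE (c t : ℝ) : ∀ᶠ s in 𝓝[≥] t, (c ≤ s ↔ c ≤ t) := by
  rcases le_or_gt c t with h | h
  · filter_upwards [self_mem_nhdsWithin] with s hs using iff_of_true (h.trans hs) h
  · filter_upwards [nhdsWithin_le_nhds (Iio_mem_nhds h)] with s hs
      using iff_of_false (not_le.2 hs) (not_le.2 h)

theorem eventually_le_iff_nhds {c t : ℝ} (h : t ≠ c) : ∀ᶠ s in 𝓝 t, (c ≤ s ↔ c ≤ t) := by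
  rcases h.lt_or_gt with h | h
  · filter_upwards [Iio_mem_nhds h] with s hs using iff_of_false (not_le.2 hs) (not_le.2 h)
  · filter_upwards [Ioi_mem_nhds h] with s hs using iff_of_true hs.le h.le

theorem min_eq_ite_of_iff {c s t : ℝ} (h : c ≤ s ↔ c ≤ t) :
    min s c = if c ≤ t then c else s := by
  split_ifs with hc
  · exact min_eq_right (h.2 hc)
  · exact min_eq_left (not_le.1 (mt h.1 hc)).le

theorem max_sub_eq_ite_of_iff {c s t : ℝ} (h : c ≤ s ↔ c ≤ t) :
    max (s - c) 0 = if c ≤ t then s - c else 0 := by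
  split_ifs with hc
  · exact max_eq_left (sub_nonneg.2 (h.2 hc))
  · exact max_eq_right (sub_nonpos.2 (not_le.1 (mt h.1 hc)).le)

theorem mul_nonneg_iff_of_strictMono_of_strictAnti {f g : ℝ → ℝ} (hf : StrictMono f)
    (hg : StrictAnti g) (hf0 : f 0 = 0) (hg0 : g 0 = 0) {x y : ℝ} :
    0 ≤ f x * g y ↔ x * y ≤ 0 := by
  have h₁ : 0 ≤ f x ↔ 0 ≤ x := by simpa [hf0] using hf.le_iff_le (a := 0) (b := x)
  have h₂ : f x ≤ 0 ↔ x ≤ 0 := by simpa [hf0] using hf.le_iff_le (a := x) (b := 0)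
  have h₃ : 0 ≤ g y ↔ y ≤ 0 := by simpa [hg0] using hg.le_iff_ge (a := 0) (b := y)
  have h₄ : g y ≤ 0 ↔ 0 ≤ y := by simpa [hg0] using hg.le_iff_ge (a := y) (b := 0)
  rw [mul_nonneg_iff, mul_nonpos_iff, h₁, h₂, h₃, h₄]

theorem eventually_eq_add_mul_of_hasDerivWithinAt_Ici {f r : ℝ → ℝ} {t : ℝ}
    (hf : ContinuousOn f (Ici t)) (hd : ∀ s, t ≤ s → HasDerivWithinAt f (r s) (Ici s) s)
    (hr : ∀ᶠ s in 𝓝[>] t, r s = r t) : ∀ᶠ s in 𝓝[≥] t, f s = f t + (s - t) * r t := by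
  obtain ⟨u, htu, hsub⟩ := mem_nhdsGT_iff_exists_Ioo_subset.1 hr
  filter_upwards [Ico_mem_nhdsGE htu] with s hs
  have hconst := constant_of_has_deriv_right_zero (f := fun x => f x - (x - t) * r t)
    ((hf.mono Icc_subset_Ici_self).sub (by fun_prop)) (fun x hx => by
      have hrx : r x = r t :=
        hx.1.eq_or_lt.elim (fun h => h ▸ rfl) fun h => hsub ⟨h, hx.2.trans hs.2⟩
      simpa [hrx] using
        (hd x hx.1).fun_sub (((hasDerivWithinAt_id x _).sub_const t).mul_const (r t)))
    s ⟨hs.1, le_rfl⟩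
  simp only [sub_self, zero_mul, sub_zero] at hconst
  linarith

theorem hasDerivAt_symm_of_hasDerivAt_inv {W : ℝ → ℝ} (τ : ℝ ≃ₜ ℝ)
    (hτ : ∀ x, HasDerivAt τ (W x)⁻¹ x) (hW : ∀ x, W x ≠ 0) (y : ℝ) :
    HasDerivAt τ.symm (W (τ.symm y)) y := by
  simpa using (hτ (τ.symm y)).of_local_left_inverse τ.symm.continuous.continuousAt
    (inv_ne_zero (hW _)) (.of_forall τ.apply_symm_apply)

theorem exists_homeomorph_hasDerivAt_inv_of_pos {W : ℝ → ℝ} (hW : Continuous W)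
    (hpos : ∀ x, 0 < W x) (hbdd : BddAbove (range W)) :
    ∃ τ : ℝ ≃ₜ ℝ, τ 0 = 0 ∧ ∀ x, HasDerivAt τ (W x)⁻¹ x := by
  obtain ⟨M, hM⟩ := hbdd
  have hWM : ∀ x, W x ≤ M := fun x => hM ⟨x, rfl⟩
  have hM0 : 0 < M := (hpos 0).trans_le (hWM 0)
  have hinv : Continuous fun x => (W x)⁻¹ := hW.inv₀ fun x => (hpos x).ne'
  set p : ℝ → ℝ := fun x => ∫ s in (0 : ℝ)..x, (W s)⁻¹
  have hp : ∀ x, HasDerivAt p (W x)⁻¹ x := fun x =>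
    intervalIntegral.integral_hasDerivAt_right (hinv.intervalIntegrable _ _)
      (hinv.stronglyMeasurableAtFilter _ _) hinv.continuousAt
  have hp0 : p 0 = 0 := intervalIntegral.integral_same
  -- `p` grows at least at rate `M⁻¹`, so it is onto
  have hlin : Monotone fun x => p x - M⁻¹ * x :=
    monotone_of_hasDerivAt_nonneg (fun x => (hp x).sub ((hasDerivAt_id x).const_mul M⁻¹))
      fun x => by simpa using inv_anti₀ (hpos x) (hWM x)
  have htop : Tendsto p atTop atTop := by
    refine tendsto_atTop_mono' _ ?_ (tendsto_id.const_mul_atTop (inv_pos.2 hM0))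
    filter_upwards [eventually_ge_atTop 0] with x hx
    simpa [hp0] using hlin hx
  have hbot : Tendsto p atBot atBot := by
    refine tendsto_atBot_mono' _ ?_ (tendsto_id.const_mul_atBot (inv_pos.2 hM0))
    filter_upwards [eventually_le_atBot 0] with x hx
    simpa [hp0] using hlin hx
  have hmono : StrictMono p := strictMono_of_hasDerivAt_pos hp fun x => inv_pos.2 (hpos x)
  have hsurj : Function.Surjective p :=
    (continuous_iff_continuousAt.2 fun x => (hp x).continuousAt).surjective htop hbot
  exact ⟨(hmono.orderIsoOfSurjective p hsurj).toHomeomorph, hp0, hp⟩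

theorem exists_homeomorph_hasDerivAt_inv_of_neg {W : ℝ → ℝ} (hW : Continuous W)
    (hneg : ∀ x, W x < 0) (hbdd : BddBelow (range W)) :
    ∃ τ : ℝ ≃ₜ ℝ, τ 0 = 0 ∧ ∀ x, HasDerivAt τ (W x)⁻¹ x := by
  obtain ⟨τ, hτ0, hτ⟩ := exists_homeomorph_hasDerivAt_inv_of_pos hW.neg
    (fun x => neg_pos.2 (hneg x)) <| by
      obtain ⟨m, hm⟩ := hbdd
      exact ⟨-m, by rintro _ ⟨x, rfl⟩; exact neg_le_neg (hm ⟨x, rfl⟩)⟩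
  exact ⟨τ.trans (Homeomorph.neg ℝ), by simp [hτ0], fun x => (hτ x).neg.congr_deriv (by simp)⟩

/-- Rate of the time coordinate `a` of a train when the other train is at time coordinate `b`. -/
noncomputable def waitRate (a b : ℝ) : ℝ := if a = 0 ∧ b < 0 then 0 else 1

noncomputable def arrival (a : ℝ) : ℝ := max (-a) 0

/-- Run until the arrival time, then wait until the later arrival time, then run again. -/
noncomputable def clock (a b t : ℝ) : ℝ :=
  a + min t (arrival a) + max (t - max (arrival a) (arrival b)) 0

noncomputable def clockRate (a b t : ℝ) : ℝ := if arrival a ≤ t ∧ t < arrival b then 0 else 1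

theorem arrival_nonneg (a : ℝ) : 0 ≤ arrival a := le_max_right _ _

theorem add_arrival_nonneg (a : ℝ) : 0 ≤ a + arrival a := by
  unfold arrival; linarith [le_max_left (-a) 0]

theorem add_neg_of_lt_arrival {a t : ℝ} (ht : 0 ≤ t) (h : t < arrival a) : a + t < 0 := by
  unfold arrival at h; rcases lt_max_iff.1 h with h | h <;> linarith

theorem clock_zero (a b : ℝ) : clock a b 0 = a := by
  simp [clock, arrival_nonneg]

@[fun_prop]
theorem Continuous.clock {α : Type*} [TopologicalSpace α] {f g h : α → ℝ} (hf : Continuous f)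
    (hg : Continuous g) (hh : Continuous h) :
    Continuous fun x => _root_.clock (f x) (g x) (h x) := by
  unfold _root_.clock arrival; fun_prop

theorem clock_lt_zero_of_lt_arrival {a b t : ℝ} (ht : 0 ≤ t) (h : t < arrival a) :
    clock a b t < 0 := by
  have := add_neg_of_lt_arrival ht h
  have hm : t < max (arrival a) (arrival b) := h.trans_le (le_max_left _ _)
  rw [clock, min_eq_left h.le, max_eq_right (by linarith)]
  linarith

theorem clock_nonneg_of_arrival_le {a b t : ℝ} (h : arrival a ≤ t) : 0 ≤ clock a b t := by
  rw [clock, min_eq_right h]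
  linarith [add_arrival_nonneg a, le_max_right (t - max (arrival a) (arrival b)) 0]

theorem clock_neg_iff {a b t : ℝ} (ht : 0 ≤ t) : clock a b t < 0 ↔ t < arrival a :=
  ⟨fun h => lt_of_not_ge fun h' => (clock_nonneg_of_arrival_le h').not_gt h,
    clock_lt_zero_of_lt_arrival ht⟩

theorem clock_eq_zero {a b t : ℝ} (hab : 0 ≤ a * b) (ha : arrival a ≤ t) (hb : t < arrival b) :
    clock a b t = 0 := by
  have hb0 : b < 0 := by
    have := add_neg_of_lt_arrival ((arrival_nonneg a).trans ha) hb
    linarith [(arrival_nonneg a).trans ha]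
  have ha0 : a ≤ 0 := by nlinarith
  have hm : max (arrival a) (arrival b) = arrival b := max_eq_right (ha.trans hb.le)
  rw [clock, min_eq_right ha, hm, max_eq_right (by linarith), arrival, max_eq_left (by linarith)]
  ring

theorem mul_clock_nonneg {a b t : ℝ} (hab : 0 ≤ a * b) (ht : 0 ≤ t) :
    0 ≤ clock a b t * clock b a t := by
  have hba : 0 ≤ b * a := mul_comm a b ▸ hab
  rcases lt_or_ge t (arrival a) with ha | ha <;> rcases lt_or_ge t (arrival b) with hb | hb
  · exact mul_nonneg_of_nonpos_of_nonpos (clock_lt_zero_of_lt_arrival ht ha).le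
      (clock_lt_zero_of_lt_arrival ht hb).le
  · rw [clock_eq_zero hba hb ha, mul_zero]
  · rw [clock_eq_zero hab ha hb, zero_mul]
  · exact mul_nonneg (clock_nonneg_of_arrival_le ha) (clock_nonneg_of_arrival_le hb)

theorem waitRate_clock {a b t : ℝ} (hab : 0 ≤ a * b) (ht : 0 ≤ t) :
    waitRate (clock a b t) (clock b a t) = clockRate a b t := by
  have h : clock a b t = 0 ∧ clock b a t < 0 ↔ arrival a ≤ t ∧ t < arrival b := by
    rw [clock_neg_iff ht]
    refine ⟨fun h => ⟨le_of_not_gt fun h' => (clock_lt_zero_of_lt_arrival ht h').ne h.1, h.2⟩,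
      fun h => ⟨clock_eq_zero hab h.1 h.2, h.2⟩⟩
  simp only [waitRate, clockRate, h]

theorem clock_eq_of_iff {a b s t : ℝ} (ha : arrival a ≤ s ↔ arrival a ≤ t)
    (hb : arrival b ≤ s ↔ arrival b ≤ t) :
    clock a b s = clock a b t + (s - t) * clockRate a b t ∧ clockRate a b s = clockRate a b t := by
  refine ⟨?_, by simp only [clockRate, ha, ← not_le, hb]⟩
  have hm : max (arrival a) (arrival b) ≤ s ↔ max (arrival a) (arrival b) ≤ t := by
    simp only [max_le_iff, ha, hb]
  rw [clock, clock, min_eq_ite_of_iff ha, min_eq_ite_of_iff Iff.rfl, max_sub_eq_ite_of_iff hm,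
    max_sub_eq_ite_of_iff Iff.rfl, clockRate]
  rcases le_or_gt (arrival a) t with hα | hα <;> rcases le_or_gt (arrival b) t with hβ | hβ
  · simp [hα, hβ, not_lt.2 hβ]; ring
  · simp [hα, hβ, not_le.2 hβ]
  · simp [hβ, not_le.2 hα]
  · simp [not_le.2 hα, not_le.2 hβ]

theorem hasDerivAt_clock {a b t : ℝ} (ha : t ≠ arrival a) (hb : t ≠ arrival b) :
    HasDerivAt (clock a b) (clockRate a b t) t := by
  have hline : HasDerivAt (fun s => clock a b t + (s - t) * clockRate a b t)
      (clockRate a b t) t := by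
    simpa using (((hasDerivAt_id t).sub_const t).mul_const (clockRate a b t)).const_add
      (clock a b t)
  refine hline.congr_of_eventuallyEq ?_
  filter_upwards [eventually_le_iff_nhds ha, eventually_le_iff_nhds hb]
    with s ha hb using (clock_eq_of_iff ha hb).1

theorem eventually_waitRate_eq_of_tendsto {α : Type*} {l : Filter α} {a b : α → ℝ} {a₀ b₀ : ℝ}
    (h : Tendsto (fun x => waitRate (a x) (b x)) l (𝓝 (waitRate a₀ b₀))) :
    ∀ᶠ x in l, waitRate (a x) (b x) = waitRate a₀ b₀ := by
  filter_upwards [h (Metric.ball_mem_nhds _ one_half_pos)] with x hx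
  simp only [mem_preimage, Metric.mem_ball, Real.dist_eq, waitRate] at hx ⊢
  split_ifs at hx ⊢ <;> first | rfl | norm_num at hx

theorem eq_clock_of_eventually_eq_waitRate {a b : ℝ → ℝ} (ha : ContinuousOn a (Ici 0))
    (hb : ContinuousOn b (Ici 0)) (hab : 0 ≤ a 0 * b 0)
    (ha' : ∀ t, 0 ≤ t → ∀ᶠ s in 𝓝[≥] t, a s = a t + (s - t) * waitRate (a t) (b t))
    (hb' : ∀ t, 0 ≤ t → ∀ᶠ s in 𝓝[≥] t, b s = b t + (s - t) * waitRate (b t) (a t))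
    {t : ℝ} (ht : 0 ≤ t) : (a t, b t) = (clock (a 0) (b 0) t, clock (b 0) (a 0) t) := by
  have hba : 0 ≤ b 0 * a 0 := mul_comm (a 0) (b 0) ▸ hab
  have hclock : Continuous fun s => (clock (a 0) (b 0) s, clock (b 0) (a 0) s) := by fun_prop
  refine IsClosed.Icc_subset_of_forall_mem_nhdsWithin (a := 0) (b := t)
    (s := {s | (a s, b s) = (clock (a 0) (b 0) s, clock (b 0) (a 0) s)}) ?_
    (by simp [clock_zero]) ?_ ⟨ht, le_rfl⟩
  · rw [inter_comm]
    exact (((ha.prodMk hb).mono Icc_subset_Ici_self).prodMk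
      hclock.continuousOn).preimage_isClosed_of_isClosed isClosed_Icc isClosed_diagonal
  · -- where the two pairs agree, they run at the same rates
    rintro x ⟨hx, hx0, -⟩
    obtain ⟨hax, hbx⟩ := Prod.mk.inj hx
    filter_upwards [nhdsWithin_mono _ Ioi_subset_Ici_self (ha' x hx0),
      nhdsWithin_mono _ Ioi_subset_Ici_self (hb' x hx0),
      nhdsWithin_mono _ Ioi_subset_Ici_self (eventually_le_iff_nhdsGE (arrival (a 0)) x),
      nhdsWithin_mono _ Ioi_subset_Ici_self (eventually_le_iff_nhdsGE (arrival (b 0)) x)]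
      with s has hbs h₁ h₂
    rw [has, hbs, hax, hbx, waitRate_clock hab hx0, waitRate_clock hba hx0,
      (clock_eq_of_iff h₁ h₂).1, (clock_eq_of_iff h₂ h₁).1]

section Trains

variable {V₁ V₂ : ℝ → ℝ} {τ₁ τ₂ : ℝ ≃ₜ ℝ} {F : ℝ × ℝ → ℝ × ℝ} {X : ℝ × ℝ}

theorem trainField_eq_waitRate {f g : ℝ → ℝ} (hf : StrictMono f) (hg : StrictAnti g)
    (hf0 : f 0 = 0) (hg0 : g 0 = 0) (X : ℝ × ℝ) :
    (if X.1 = 0 ∧ 0 < X.2 then ((0 : ℝ), V₂ X.2)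
      else if X.2 = 0 ∧ X.1 < 0 then (V₁ X.1, (0 : ℝ)) else (V₁ X.1, V₂ X.2)) =
    (V₁ X.1 * waitRate (f X.1) (g X.2), V₂ X.2 * waitRate (g X.2) (f X.1)) := by
  have h₁ : f X.1 = 0 ↔ X.1 = 0 := by simpa [hf0] using hf.injective.eq_iff (a := X.1) (b := 0)
  have h₂ : g X.2 = 0 ↔ X.2 = 0 := by simpa [hg0] using hg.injective.eq_iff (a := X.2) (b := 0)
  have h₃ : f X.1 < 0 ↔ X.1 < 0 := by simpa [hf0] using hf.lt_iff_lt (a := X.1) (b := 0)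
  have h₄ : g X.2 < 0 ↔ 0 < X.2 := by simpa [hg0] using hg.lt_iff_gt (a := X.2) (b := 0)
  simp only [waitRate, h₁, h₂, h₃, h₄]
  by_cases hA : X.1 = 0 ∧ 0 < X.2
  · simp [hA, hA.2.ne']
  · by_cases hB : X.2 = 0 ∧ X.1 < 0
    · simp [hB, hB.2.ne]
    · simp [hA, hB]

noncomputable def trainFlow (τ₁ τ₂ : ℝ ≃ₜ ℝ) (X : ℝ × ℝ) (t : ℝ) : ℝ × ℝ :=
  (τ₁.symm (clock (τ₁ X.1) (τ₂ X.2) t), τ₂.symm (clock (τ₂ X.2) (τ₁ X.1) t))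

theorem trainFlow_zero (X : ℝ × ℝ) : trainFlow τ₁ τ₂ X 0 = X := by
  simp [trainFlow, clock_zero]

theorem continuous_trainFlow : Continuous fun p : (ℝ × ℝ) × ℝ => trainFlow τ₁ τ₂ p.1 p.2 := by
  unfold trainFlow; fun_prop

theorem mul_trainFlow_nonneg (hX : 0 ≤ τ₁ X.1 * τ₂ X.2) {t : ℝ} (ht : 0 ≤ t) :
    0 ≤ τ₁ (trainFlow τ₁ τ₂ X t).1 * τ₂ (trainFlow τ₁ τ₂ X t).2 := by
  simpa [trainFlow] using mul_clock_nonneg hX ht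

variable (hF : ∀ X : ℝ × ℝ,
  F X = (V₁ X.1 * waitRate (τ₁ X.1) (τ₂ X.2), V₂ X.2 * waitRate (τ₂ X.2) (τ₁ X.1)))
include hF

theorem field_trainFlow (hX : 0 ≤ τ₁ X.1 * τ₂ X.2) {t : ℝ} (ht : 0 ≤ t) :
    F (trainFlow τ₁ τ₂ X t) = (V₁ (trainFlow τ₁ τ₂ X t).1 * clockRate (τ₁ X.1) (τ₂ X.2) t,
      V₂ (trainFlow τ₁ τ₂ X t).2 * clockRate (τ₂ X.2) (τ₁ X.1) t) := by
  rw [hF]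
  simp [trainFlow, waitRate_clock hX ht, waitRate_clock (mul_comm (τ₁ X.1) _ ▸ hX) ht]

theorem tendsto_field_trainFlow (hV₁ : Continuous V₁) (hV₂ : Continuous V₂)
    (hX : 0 ≤ τ₁ X.1 * τ₂ X.2) {l : Filter ℝ} {t : ℝ} (hl : l ≤ 𝓝 t) (ht : 0 ≤ t)
    (hs : ∀ᶠ s in l, 0 ≤ s ∧ (arrival (τ₁ X.1) ≤ s ↔ arrival (τ₁ X.1) ≤ t) ∧
      (arrival (τ₂ X.2) ≤ s ↔ arrival (τ₂ X.2) ≤ t)) :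
    Tendsto (fun s => F (trainFlow τ₁ τ₂ X s)) l (𝓝 (F (trainFlow τ₁ τ₂ X t))) := by
  have hflow : Continuous (trainFlow τ₁ τ₂ X) :=
    continuous_trainFlow.comp (continuous_const.prodMk continuous_id)
  have hlim : Continuous fun s => (V₁ (trainFlow τ₁ τ₂ X s).1 * clockRate (τ₁ X.1) (τ₂ X.2) t,
      V₂ (trainFlow τ₁ τ₂ X s).2 * clockRate (τ₂ X.2) (τ₁ X.1) t) := by fun_prop
  rw [field_trainFlow hF hX ht]
  refine ((hlim.tendsto t).mono_left hl).congr' ?_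
  filter_upwards [hs] with s ⟨hs0, h₁, h₂⟩
  rw [field_trainFlow hF hX hs0, (clock_eq_of_iff h₁ h₂).2, (clock_eq_of_iff h₂ h₁).2]

variable (hτ₁ : ∀ x, HasDerivAt τ₁ (V₁ x)⁻¹ x) (hτ₂ : ∀ x, HasDerivAt τ₂ (V₂ x)⁻¹ x)
  (hV₁ : ∀ x, V₁ x ≠ 0) (hV₂ : ∀ x, V₂ x ≠ 0)
include hτ₁ hτ₂ hV₁ hV₂

theorem hasDerivAt_trainFlow (hX : 0 ≤ τ₁ X.1 * τ₂ X.2) {t : ℝ} (ht : 0 ≤ t)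
    (h₁ : t ≠ arrival (τ₁ X.1)) (h₂ : t ≠ arrival (τ₂ X.2)) :
    HasDerivAt (trainFlow τ₁ τ₂ X) (F (trainFlow τ₁ τ₂ X t)) t := by
  rw [field_trainFlow hF hX ht]
  exact ((hasDerivAt_symm_of_hasDerivAt_inv τ₁ hτ₁ hV₁ _).comp t (hasDerivAt_clock h₁ h₂)).prodMk
    ((hasDerivAt_symm_of_hasDerivAt_inv τ₂ hτ₂ hV₂ _).comp t (hasDerivAt_clock h₂ h₁))

theorem isNetIntegralCurve_trainFlow (hV₁c : Continuous V₁) (hV₂c : Continuous V₂)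
    (hX : 0 ≤ τ₁ X.1 * τ₂ X.2) : IsNetIntegralCurve F X ⊤ (trainFlow τ₁ τ₂ X) := by
  have hflow : Continuous (trainFlow τ₁ τ₂ X) :=
    continuous_trainFlow.comp (continuous_const.prodMk continuous_id)
  have h := isNetIntegralCurve_top_of_finite (F := F)
    (D := {0, arrival (τ₁ X.1), arrival (τ₂ X.2)}) (toFinite _) (by simp)
    (by simp [insert_subset_iff, arrival_nonneg]) hflow.continuousOn (fun t ht htD => ?_)
    (fun t htD => ?_)
  · rwa [trainFlow_zero] at h
  · simp only [mem_insert_iff, mem_singleton_iff, not_or] at htD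
    refine ⟨hasDerivAt_trainFlow hF hτ₁ hτ₂ hV₁ hV₂ hX ht.le htD.2.1 htD.2.2,
      tendsto_field_trainFlow hF hV₁c hV₂c hX le_rfl ht.le ?_⟩
    filter_upwards [lt_mem_nhds ht, eventually_le_iff_nhds htD.2.1, eventually_le_iff_nhds htD.2.2]
      with s hs h₁ h₂ using ⟨hs.le, h₁, h₂⟩
  · have ht : 0 ≤ t := by
      simp only [mem_insert_iff, mem_singleton_iff] at htD
      rcases htD with rfl | rfl | rfl <;> simp [arrival_nonneg]
    refine tendsto_field_trainFlow hF hV₁c hV₂c hX nhdsWithin_le_nhds ht ?_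
    filter_upwards [self_mem_nhdsWithin,
      nhdsWithin_mono _ Ioi_subset_Ici_self (eventually_le_iff_nhdsGE (arrival (τ₁ X.1)) t),
      nhdsWithin_mono _ Ioi_subset_Ici_self (eventually_le_iff_nhdsGE (arrival (τ₂ X.2)) t)]
      with s hs h₁ h₂ using ⟨ht.trans hs.le, h₁, h₂⟩

/-- The right-limit condition on `φ'` makes the `{0, 1}`-valued rates of the time coordinates
right-continuous, hence constant just after `t`. -/
theorem IsNetIntegralCurve.eventually_timeCoord_eq (hV₁c : Continuous V₁) (hV₂c : Continuous V₂)
    {ψ : ℝ → ℝ × ℝ} (hψ : IsNetIntegralCurve F X ⊤ ψ) {t : ℝ} (ht : 0 ≤ t) :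
    (∀ᶠ s in 𝓝[≥] t,
      τ₁ (ψ s).1 = τ₁ (ψ t).1 + (s - t) * waitRate (τ₁ (ψ t).1) (τ₂ (ψ t).2)) ∧
    ∀ᶠ s in 𝓝[≥] t,
      τ₂ (ψ s).2 = τ₂ (ψ t).2 + (s - t) * waitRate (τ₂ (ψ t).2) (τ₁ (ψ t).1) := by
  have hψc : ContinuousOn ψ (Ici t) := by
    simpa using hψ.2.2.1.mono (by simpa using Ici_subset_Ici.2 ht)
  have hd : ∀ s, t ≤ s → HasDerivWithinAt ψ (F (ψ s)) (Ici s) s := fun s hs =>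
    hψ.hasDerivWithinAt_Ici (by simpa using ht.trans hs)
  obtain ⟨-, -, -, -, hlim⟩ := hψ.exists_hasDerivAt_Ioo (by simpa using ht)
  have hψt : Tendsto ψ (𝓝[>] t) (𝓝 (ψ t)) :=
    ((hψc t self_mem_Ici).mono Ioi_subset_Ici_self).tendsto
  have rate₁ : ∀ Y : ℝ × ℝ, waitRate (τ₁ Y.1) (τ₂ Y.2) = (F Y).1 / V₁ Y.1 := fun Y => by
    rw [hF, mul_div_cancel_left₀ _ (hV₁ _)]
  have rate₂ : ∀ Y : ℝ × ℝ, waitRate (τ₂ Y.2) (τ₁ Y.1) = (F Y).2 / V₂ Y.2 := fun Y => by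
    rw [hF, mul_div_cancel_left₀ _ (hV₂ _)]
  constructor
  · refine eventually_eq_add_mul_of_hasDerivWithinAt_Ici (f := fun s => τ₁ (ψ s).1)
      (r := fun s => waitRate (τ₁ (ψ s).1) (τ₂ (ψ s).2))
      ((τ₁.continuous.comp continuous_fst).comp_continuousOn hψc) (fun s hs => ?_)
      (eventually_waitRate_eq_of_tendsto ?_)
    · exact ((hτ₁ _).comp_hasDerivWithinAt s
        (hasFDerivAt_fst.comp_hasDerivWithinAt s (hd s hs))).congr_deriv (by simp [hF, hV₁])
    · rw [funext fun s => rate₁ (ψ s), rate₁ (ψ t)]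
      exact hlim.fst_nhds.div ((hV₁c.tendsto _).comp hψt.fst_nhds) (hV₁ _)
  · refine eventually_eq_add_mul_of_hasDerivWithinAt_Ici (f := fun s => τ₂ (ψ s).2)
      (r := fun s => waitRate (τ₂ (ψ s).2) (τ₁ (ψ s).1))
      ((τ₂.continuous.comp continuous_snd).comp_continuousOn hψc) (fun s hs => ?_)
      (eventually_waitRate_eq_of_tendsto ?_)
    · exact ((hτ₂ _).comp_hasDerivWithinAt s
        (hasFDerivAt_snd.comp_hasDerivWithinAt s (hd s hs))).congr_deriv (by simp [hF, hV₂])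
    · rw [funext fun s => rate₂ (ψ s), rate₂ (ψ t)]
      exact hlim.snd_nhds.div ((hV₂c.tendsto _).comp hψt.snd_nhds) (hV₂ _)

theorem eq_trainFlow_of_isNetIntegralCurve (hV₁c : Continuous V₁) (hV₂c : Continuous V₂)
    (hX : 0 ≤ τ₁ X.1 * τ₂ X.2) {ψ : ℝ → ℝ × ℝ} (hψ : IsNetIntegralCurve F X ⊤ ψ) {t : ℝ}
    (ht : 0 ≤ t) : ψ t = trainFlow τ₁ τ₂ X t := by
  have hψc : ContinuousOn ψ (Ici 0) := by simpa using hψ.2.2.1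
  have h := eq_clock_of_eventually_eq_waitRate (a := fun s => τ₁ (ψ s).1)
    (b := fun s => τ₂ (ψ s).2) ((τ₁.continuous.comp continuous_fst).comp_continuousOn hψc)
    ((τ₂.continuous.comp continuous_snd).comp_continuousOn hψc) (by simpa [hψ.2.1] using hX)
    (fun s hs => (hψ.eventually_timeCoord_eq hF hτ₁ hτ₂ hV₁ hV₂ hV₁c hV₂c hs).1)
    (fun s hs => (hψ.eventually_timeCoord_eq hF hτ₁ hτ₂ hV₁ hV₂ hV₁c hV₂c hs).2) ht
  simp only [hψ.2.1, Prod.mk.injEq] at h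
  simp [trainFlow, ← h.1, ← h.2]

end Trains

/-- Train dynamics on a single track line with a passing loop at `0`
and zero waiting thresholds. Let `V₁ > 0 > V₂` be bounded `C¹` velocity fields, let
`ℝ²_∘ = {x₁x₂ ≤ 0}` and let `F` stop train 1 on `{x₁ = 0, x₂ > 0}` and train 2 on
`{x₂ = 0, x₁ < 0}`. Then `ℝ²_∘` is positively invariant, through every point of `ℝ²_∘`
there is a unique complete integral curve of `F` remaining in `ℝ²_∘`, and the resulting
semiflow `Φ* : ℝ²_∘ × ℝ₊ → ℝ²_∘` is continuous. -/
theorem train_dynamics_semiflow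
    (V₁ V₂ : ℝ → ℝ) (hV₁ : ContDiff ℝ 1 V₁) (hV₂ : ContDiff ℝ 1 V₂)
    (hbdd : ∃ M : ℝ, ∀ x : ℝ, |V₁ x| ≤ M ∧ |V₂ x| ≤ M)
    (hsign : ∀ x : ℝ, V₂ x < 0 ∧ 0 < V₁ x)
    (F : ℝ × ℝ → ℝ × ℝ)
    (hFdef : F = fun X =>
      if X.1 = 0 ∧ 0 < X.2 then ((0 : ℝ), V₂ X.2)
      else if X.2 = 0 ∧ X.1 < 0 then (V₁ X.1, (0 : ℝ))
      else (V₁ X.1, V₂ X.2))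
    (R : Set (ℝ × ℝ)) (hR : R = {X : ℝ × ℝ | X.1 * X.2 ≤ 0}) :
    (∀ X ∈ R, ∀ ψ : ℝ → ℝ × ℝ, IsNetIntegralCurve F X (⊤ : EReal) ψ →
      ∀ t : ℝ, 0 ≤ t → ψ t ∈ R) ∧
    ∃ Φ : ℝ × ℝ → ℝ → ℝ × ℝ,
      (∀ X ∈ R, IsNetIntegralCurve F X (⊤ : EReal) (Φ X) ∧ ∀ t : ℝ, 0 ≤ t → Φ X t ∈ R) ∧
      (∀ X ∈ R, ∀ ψ : ℝ → ℝ × ℝ, IsNetIntegralCurve F X (⊤ : EReal) ψ →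
        (∀ t : ℝ, 0 ≤ t → ψ t ∈ R) → ∀ t : ℝ, 0 ≤ t → ψ t = Φ X t) ∧
      ContinuousOn (fun p : (ℝ × ℝ) × ℝ => Φ p.1 p.2) (R ×ˢ Ici (0 : ℝ)) := by
  obtain ⟨M, hM⟩ := hbdd
  obtain ⟨τ₁, hτ₁0, hτ₁⟩ := exists_homeomorph_hasDerivAt_inv_of_pos hV₁.continuous
    (fun x => (hsign x).2) ⟨M, by rintro _ ⟨x, rfl⟩; exact (le_abs_self _).trans (hM x).1⟩
  obtain ⟨τ₂, hτ₂0, hτ₂⟩ := exists_homeomorph_hasDerivAt_inv_of_neg hV₂.continuous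
    (fun x => (hsign x).1) ⟨-M, by rintro _ ⟨x, rfl⟩; exact neg_le_of_abs_le (hM x).2⟩
  have hmono : StrictMono τ₁ := strictMono_of_hasDerivAt_pos hτ₁ fun x => inv_pos.2 (hsign x).2
  have hanti : StrictAnti τ₂ := strictAnti_of_hasDerivAt_neg hτ₂ fun x => inv_lt_zero.2 (hsign x).1
  have hF : ∀ X : ℝ × ℝ, F X = (V₁ X.1 * waitRate (τ₁ X.1) (τ₂ X.2),
      V₂ X.2 * waitRate (τ₂ X.2) (τ₁ X.1)) := fun X => by
    rw [hFdef]
    exact trainField_eq_waitRate hmono hanti hτ₁0 hτ₂0 X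
  have hR' : ∀ X, X ∈ R ↔ 0 ≤ τ₁ X.1 * τ₂ X.2 := fun X => by
    rw [hR]
    exact (mul_nonneg_iff_of_strictMono_of_strictAnti hmono hanti hτ₁0 hτ₂0).symm
  have hV₁0 : ∀ x, V₁ x ≠ 0 := fun x => (hsign x).2.ne'
  have hV₂0 : ∀ x, V₂ x ≠ 0 := fun x => (hsign x).1.ne
  have huniq : ∀ X ∈ R, ∀ ψ, IsNetIntegralCurve F X ⊤ ψ → ∀ t, 0 ≤ t →
      ψ t = trainFlow τ₁ τ₂ X t := fun X hX _ hψ _ ht =>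
    eq_trainFlow_of_isNetIntegralCurve hF hτ₁ hτ₂ hV₁0 hV₂0 hV₁.continuous hV₂.continuous
      ((hR' X).1 hX) hψ ht
  have hmem : ∀ X ∈ R, ∀ t, 0 ≤ t → trainFlow τ₁ τ₂ X t ∈ R := fun X hX _ ht =>
    (hR' _).2 (mul_trainFlow_nonneg ((hR' X).1 hX) ht)
  refine ⟨fun X hX ψ hψ t ht => huniq X hX ψ hψ t ht ▸ hmem X hX t ht, trainFlow τ₁ τ₂,
    fun X hX => ⟨?_, hmem X hX⟩, fun X hX ψ hψ _ => huniq X hX ψ hψ,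
    continuous_trainFlow.continuousOn⟩
  exact isNetIntegralCurve_trainFlow hF hτ₁ hτ₂ hV₁0 hV₂0 hV₁.continuous hV₂.continuous
    ((hR' X).1 hX)
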